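/- For every β ∈ (0,1) and e ∈ [0,1), the monodromy matrix is 1-nondegenerate: det(γ_{β,e}(2π) − I₂) ≠ 0. Equivalently, the only 2π-periodic solution of x''(t) = −x(t) + β x(t)/(1 + e cos t) (i.e., a solution with x(2π) = x(0) and x'(2π) = x'(0)) is x ≡ 0. -/

import Mathlib

open Real Matrix

attribute [local instance] Matrix.normedAddCommGroup

noncomputable section

/-- The standard symplectic matrix `J = [[0,-1],[1,0]]`. -/
def Jmat : Matrix (Fin 2) (Fin 2) ℝ := !![0, -1; 1, 0]

/-- The coefficient matrix `B_{β,e}(t) = diag(1, 1 - β/(1 + e cos t))`. -/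
def Bmat (β e t : ℝ) : Matrix (Fin 2) (Fin 2) ℝ :=
  !![1, 0; 0, 1 - β / (1 + e * Real.cos t)]

/-- `γ` is the fundamental solution of `γ' = J B_{β,e} γ`, `γ(0) = I₂`
(derivative taken entrywise). -/
def IsFundSol (β e : ℝ) (γ : ℝ → Matrix (Fin 2) (Fin 2) ℝ) : Prop :=
  γ 0 = 1 ∧ ∀ (t : ℝ) (i j : Fin 2),
    HasDerivAt (fun s => γ s i j) ((Jmat * Bmat β e t * γ t) i j) t

/-- The trace-formula function `f(β,-1)`. -/
def fTrace (β : ℝ) : ℝ :=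
  β ^ 2 / (2 * (1 - β)) *
    ∫ s in (π / 2)..(3 * π / 2), ∫ t in (π / 2)..(3 * π / 2),
      Real.cos s * Real.cos t *
        (Real.cos (2 * π * Real.sqrt (1 - β) * (s - t)) ^ 2 /
            Real.cos (π * Real.sqrt (1 - β)) ^ 2 -
          Real.cos (4 * π * Real.sqrt (1 - β) * (s - t + 1 / 4)) /
            Real.cos (π * Real.sqrt (1 - β)))

/-!
Write the equation as `x'' + q x = 0` with `q = 1 - β / (1 + e cos t)`. A `2π`-periodic solution
has mean zero, because the Wronskian of `x` and `1 + e cos t` has derivative `(β - 1) x`; so a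
nonzero one changes sign. As `q < 1`, Sturm comparison with `sin` makes every interval between
consecutive zeros longer than `π`, and one period cannot hold both a positive and a negative such
interval. A fixed vector of the monodromy `γ (2π)` would give such a periodic solution.
-/

open Set

def hillCoeff (β e t : ℝ) : ℝ := 1 - β / (1 + e * cos t)

def IsHillSolution (q x x' : ℝ → ℝ) : Prop :=
  ∀ t, HasDerivAt x (x' t) t ∧ HasDerivAt x' (-(q t * x t)) t

structure IsPosNodalInterval (x : ℝ → ℝ) (a b : ℝ) : Prop where
  lt : a < b
  left : x a = 0
  right : x b = 0
  pos : ∀ t ∈ Ioo a b, 0 < x t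

theorem exists_isPosNodalInterval {x : ℝ → ℝ} (hxc : Continuous x) {l u p : ℝ}
    (hp : p ∈ Icc l u) (hxp : 0 < x p) (hl : x l = 0) (hu : x u = 0) :
    ∃ a b, l ≤ a ∧ b ≤ u ∧ IsPosNodalInterval x a b := by
  have hZ : IsClosed (x ⁻¹' {0}) := isClosed_singleton.preimage hxc
  have hbdd : BddAbove (Icc l p ∩ x ⁻¹' {0}) := ⟨p, fun t ht => ht.1.2⟩
  have hbdd' : BddBelow (Icc p u ∩ x ⁻¹' {0}) := ⟨p, fun t ht => ht.1.1⟩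
  set a := sSup (Icc l p ∩ x ⁻¹' {0})
  set b := sInf (Icc p u ∩ x ⁻¹' {0})
  obtain ⟨⟨hla, hap⟩, hxa⟩ : a ∈ Icc l p ∩ x ⁻¹' {0} :=
    (isClosed_Icc.inter hZ).csSup_mem ⟨l, ⟨le_rfl, hp.1⟩, hl⟩ hbdd
  obtain ⟨⟨hpb, hbu⟩, hxb⟩ : b ∈ Icc p u ∩ x ⁻¹' {0} :=
    (isClosed_Icc.inter hZ).csInf_mem ⟨u, ⟨hp.2, le_rfl⟩, hu⟩ hbdd'
  have hap : a < p := hap.lt_of_ne fun h => hxp.ne' (h ▸ hxa)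
  have hpb : p < b := hpb.lt_of_ne fun h => hxp.ne' (h ▸ hxb)
  have hnz : ∀ s ∈ Ioo a b, x s ≠ 0 := by
    intro s hs hxs
    rcases le_total s p with hsp | hps
    · exact hs.1.not_ge (le_csSup hbdd ⟨⟨hla.trans hs.1.le, hsp⟩, hxs⟩)
    · exact hs.2.not_ge (csInf_le hbdd' ⟨⟨hps, hs.2.le.trans hbu⟩, hxs⟩)
  refine ⟨a, b, hla, hbu, hap.trans hpb, hxa, hxb, fun t ht => ?_⟩
  by_contra! hxt
  obtain ⟨s, hs, hxs⟩ : (0 : ℝ) ∈ x '' uIcc t p :=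
    intermediate_value_uIcc hxc.continuousOn (mem_uIcc.2 (Or.inl ⟨hxt, hxp.le⟩))
  exact hnz s (ordConnected_Ioo.uIcc_subset ht ⟨hap, hpb⟩ hs) hxs

theorem IsPosNodalInterval.nonpos_of_hasDerivAt_right {x : ℝ → ℝ} {a b d : ℝ}
    (h : IsPosNodalInterval x a b) (hd : HasDerivAt x d b) : d ≤ 0 := by
  obtain ⟨hab, hxa, hxb, hpos⟩ := h
  have hmin : IsLocalMinOn x (Icc a b) b := IsMinOn.localize fun t ht => by
    rcases eq_endpoints_or_mem_Ioo_of_mem_Icc ht with rfl | rfl | ht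
    · simp [hxa, hxb]
    · exact le_refl (x t)
    · simpa [hxb] using (hpos t ht).le
  have hcone : a - b ∈ posTangentConeAt (Icc a b) b :=
    sub_mem_posTangentConeAt_of_segment_subset (by rw [segment_eq_uIcc, uIcc_of_ge hab.le])
  have := hmin.hasFDerivWithinAt_nonneg hd.hasDerivWithinAt.hasFDerivWithinAt hcone
  simp only [ContinuousLinearMap.toSpanSingleton_apply, smul_eq_mul] at this
  nlinarith

namespace IsHillSolution

variable {q x x' : ℝ → ℝ}

theorem continuous (hx : IsHillSolution q x x') : Continuous x :=
  continuous_iff_continuousAt.2 fun t => (hx t).1.continuousAt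

theorem neg (hx : IsHillSolution q x x') : IsHillSolution q (-x) (-x') := fun t =>
  ⟨(hx t).1.neg, by simpa using (hx t).2.neg⟩

theorem comp_add_const (hx : IsHillSolution q x x') {T : ℝ} (hq : Function.Periodic q T) :
    IsHillSolution q (fun t => x (t + T)) (fun t => x' (t + T)) := fun t =>
  ⟨(hx (t + T)).1.comp_add_const t T, by simpa [hq t] using (hx (t + T)).2.comp_add_const t T⟩

theorem unique {K : ℝ} (hK : ∀ t, |q t| ≤ K) {y y' : ℝ → ℝ} (hx : IsHillSolution q x x')
    (hy : IsHillSolution q y y') {t₀ : ℝ} (h : x t₀ = y t₀) (h' : x' t₀ = y' t₀) :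
    x = y := by
  have hlip (t : ℝ) :
      LipschitzWith (max 1 K).toNNReal fun p : ℝ × ℝ => (p.2, -(q t * p.1)) := by
    refine LipschitzWith.of_dist_le_mul fun p p' => ?_
    rw [Real.coe_toNNReal _ (le_max_of_le_left zero_le_one)]
    simp only [Prod.dist_eq, Real.dist_eq]
    have h₁ : |q t * (p.1 - p'.1)| ≤ K * max |p.1 - p'.1| |p.2 - p'.2| := by
      rw [abs_mul]
      exact mul_le_mul (hK t) (le_max_left _ _) (abs_nonneg _) ((abs_nonneg _).trans (hK t))
    rw [show -(q t * p.1) - -(q t * p'.1) = -(q t * (p.1 - p'.1)) by ring, abs_neg]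
    exact max_le
      ((le_max_right _ _).trans (le_mul_of_one_le_left (by positivity) (le_max_left _ _)))
      (h₁.trans (mul_le_mul_of_nonneg_right (le_max_right _ _) (by positivity)))
  have := ODE_solution_unique_univ (fun t => (hlip t).lipschitzOnWith (s := univ))
    (f := fun t => (x t, x' t)) (g := fun t => (y t, y' t))
    (fun t => ⟨(hx t).1.prodMk (hx t).2, trivial⟩)
    (fun t => ⟨(hy t).1.prodMk (hy t).2, trivial⟩)
    (Prod.ext h h')
  exact funext fun t => congrArg Prod.fst (congrFun this t)

theorem periodic {K T : ℝ} (hK : ∀ t, |q t| ≤ K) (hq : Function.Periodic q T)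
    (hx : IsHillSolution q x x') (h : x T = x 0) (h' : x' T = x' 0) : Function.Periodic x T :=
  congrFun <| (hx.comp_add_const hq).unique hK hx (t₀ := 0) (by simpa using h) (by simpa using h')

theorem pi_lt_of_isPosNodalInterval {a b : ℝ} (hx : IsHillSolution q x x')
    (hab : IsPosNodalInterval x a b) (hq : ∀ t ∈ Ioo a b, q t < 1) : π < b - a := by
  by_contra! hba
  -- the Wronskian of `x` and the solution `sin (t - a)` of `y'' + y = 0`
  set W : ℝ → ℝ := fun t => x t * cos (t - a) - x' t * sin (t - a)
  have hW (t : ℝ) : HasDerivAt W (-((1 - q t) * x t * sin (t - a))) t := by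
    have hsin : HasDerivAt (fun s => sin (s - a)) (cos (t - a)) t := by
      simpa using ((hasDerivAt_id' t).sub_const a).sin
    have hcos : HasDerivAt (fun s => cos (s - a)) (-sin (t - a)) t := by
      simpa using ((hasDerivAt_id' t).sub_const a).cos
    exact (((hx t).1.mul hcos).sub ((hx t).2.mul hsin)).congr_deriv (by ring)
  have hanti : StrictAntiOn W (Icc a b) := by
    refine strictAntiOn_of_hasDerivWithinAt_neg (convex_Icc a b)
      (HasDerivAt.continuousOn fun t _ => hW t) (fun t _ => (hW t).hasDerivWithinAt)
      fun t ht => ?_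
    rw [interior_Icc] at ht
    have hsin : 0 < sin (t - a) :=
      sin_pos_of_pos_of_lt_pi (by linarith [ht.1]) (by linarith [ht.2])
    have := mul_pos (mul_pos (sub_pos.2 (hq t ht)) (hab.pos t ht)) hsin
    linarith
  have hWb : W b < W a := hanti (left_mem_Icc.2 hab.lt.le) (right_mem_Icc.2 hab.lt.le) hab.lt
  have hd : x' b ≤ 0 := hab.nonpos_of_hasDerivAt_right (hx b).1
  have hsin : 0 ≤ sin (b - a) := sin_nonneg_of_nonneg_of_le_pi (by linarith [hab.lt]) hba
  simp only [W, hab.left, hab.right, sub_self, sin_zero] at hWb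
  nlinarith

end IsHillSolution

theorem Function.Periodic.exists_pos_of_integral_eq_zero {x : ℝ → ℝ} {T t₀ : ℝ}
    (hper : Function.Periodic x T) (hT : 0 < T) (hxc : Continuous x)
    (hint : ∫ t in 0..T, x t = 0) (ht₀ : x t₀ ≠ 0) : ∃ p, 0 < x p := by
  by_contra! hle
  obtain ⟨s, hs, hxs⟩ := hper.exists_mem_Ico₀ hT t₀
  have : 0 < ∫ t in 0..T, -x t :=
    intervalIntegral.integral_pos hT hxc.neg.continuousOn (fun t _ => neg_nonneg.2 (hle t))
      ⟨s, Ico_subset_Icc_self hs, neg_pos.2 ((hle s).lt_of_ne (hxs ▸ ht₀))⟩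
  simp [intervalIntegral.integral_neg, hint] at this

theorem Function.Periodic.nonneg_of_nodalInterval_length_gt {x : ℝ → ℝ} {L : ℝ} (hL : 0 < L)
    (hper : Function.Periodic x (2 * L)) (hxc : Continuous x)
    (hpos : ∀ a b, IsPosNodalInterval x a b → L < b - a)
    (hneg : ∀ a b, IsPosNodalInterval (-x) a b → L < b - a) {p : ℝ} (hp : 0 < x p) (t : ℝ) :
    0 ≤ x t := by
  by_contra! ht
  obtain ⟨z, -, hz⟩ : (0 : ℝ) ∈ x '' uIcc t p :=
    intermediate_value_uIcc hxc.continuousOn (mem_uIcc.2 (Or.inl ⟨ht.le, hp.le⟩))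
  have hz' : x (z + 2 * L) = 0 := (hper z).trans hz
  obtain ⟨p', hp', hxp'⟩ := hper.exists_mem_Ico (by positivity) p z
  obtain ⟨t', ht', hxt'⟩ := hper.exists_mem_Ico (by positivity) t z
  obtain ⟨a, b, hza, hbz, hab⟩ :=
    exists_isPosNodalInterval hxc (Ico_subset_Icc_self hp') (hxp' ▸ hp) hz hz'
  obtain ⟨c, d, hzc, hdz, hcd⟩ := exists_isPosNodalInterval hxc.neg (Ico_subset_Icc_self ht')
    (by simpa [← hxt'] using ht) (by simpa using hz) (by simpa using hz')
  have hba := hpos a b hab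
  have hdc := hneg c d hcd
  -- two nodal intervals inside `[z, z + 2L]`, each longer than `L`, must overlap
  have hm : max a c < min b d := by
    rw [max_lt_iff, lt_min_iff, lt_min_iff]
    refine ⟨⟨?_, ?_⟩, ?_, ?_⟩ <;> linarith [hab.lt, hcd.lt]
  obtain ⟨m, hm₁, hm₂⟩ := exists_between hm
  rw [max_lt_iff] at hm₁
  rw [lt_min_iff] at hm₂
  have h₁ := hab.pos m ⟨hm₁.1, hm₂.1⟩
  have h₂ := hcd.pos m ⟨hm₁.2, hm₂.2⟩
  simp only [Pi.neg_apply, neg_pos] at h₂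
  linarith

theorem one_sub_abs_le_one_add_mul_cos (e t : ℝ) : 1 - |e| ≤ 1 + e * cos t := by
  have := (abs_le.1 ((abs_mul e (cos t)).trans_le
    (mul_le_of_le_one_right (abs_nonneg e) (abs_cos_le_one t)))).1
  linarith

theorem one_add_mul_cos_pos (he : |e| < 1) (t : ℝ) : 0 < 1 + e * cos t := by
  linarith [one_sub_abs_le_one_add_mul_cos e t]

section hillCoeff

variable {β e : ℝ}

theorem periodic_hillCoeff : Function.Periodic (hillCoeff β e) (2 * π) := fun t => by
  simp [hillCoeff]

theorem abs_hillCoeff_le (he : |e| < 1) (t : ℝ) :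
    |hillCoeff β e t| ≤ 1 + |β| / (1 - |e|) := by
  calc |hillCoeff β e t| ≤ |1| + |β / (1 + e * cos t)| := abs_sub _ _
    _ = 1 + |β| / (1 + e * cos t) := by
      rw [abs_one, abs_div, abs_of_pos (one_add_mul_cos_pos he t)]
    _ ≤ 1 + |β| / (1 - |e|) := by
      gcongr
      exact one_sub_abs_le_one_add_mul_cos e t

theorem hillCoeff_lt_one (hβ : 0 < β) (he : |e| < 1) (t : ℝ) : hillCoeff β e t < 1 := by
  have := div_pos hβ (one_add_mul_cos_pos he t)
  unfold hillCoeff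
  linarith

theorem IsHillSolution.integral_hillCoeff_eq_zero (hβ : β ≠ 1) (he : |e| < 1)
    {x x' : ℝ → ℝ} (hx : IsHillSolution (hillCoeff β e) x x') (h : x (2 * π) = x 0)
    (h' : x' (2 * π) = x' 0) : ∫ t in 0..2 * π, x t = 0 := by
  -- the Wronskian `r x' - r' x` of `x` and `r t = 1 + e cos t` has derivative `(β - 1) x`,
  -- because `r + r'' = 1`
  set w : ℝ → ℝ := fun t => (1 + e * cos t) * x' t + e * sin t * x t
  have hw (t : ℝ) : HasDerivAt w ((β - 1) * x t) t := by
    have hr : HasDerivAt (fun s => 1 + e * cos s) (-(e * sin t)) t := by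
      simpa using ((hasDerivAt_cos t).const_mul e).const_add 1
    have hs : HasDerivAt (fun s => e * sin s) (e * cos t) t := (hasDerivAt_sin t).const_mul e
    refine ((hr.mul (hx t).2).add (hs.mul (hx t).1)).congr_deriv ?_
    have := (one_add_mul_cos_pos he t).ne'
    unfold hillCoeff
    field_simp
    ring
  have hftc := intervalIntegral.integral_eq_sub_of_hasDerivAt (fun t _ => hw t)
    ((continuous_const.mul hx.continuous).intervalIntegrable 0 (2 * π))
  simpa only [w, h, h', sin_two_pi, cos_two_pi, sin_zero, cos_zero, sub_self,
    intervalIntegral.integral_const_mul, mul_eq_zero, sub_eq_zero, hβ, false_or] using hftc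

end hillCoeff

theorem IsHillSolution.eq_zero_of_hillCoeff {β e : ℝ} (hβ : β ∈ Ioo 0 1) (he : |e| < 1)
    {x x' : ℝ → ℝ} (hx : IsHillSolution (hillCoeff β e) x x') (h : x (2 * π) = x 0)
    (h' : x' (2 * π) = x' 0) : x = 0 := by
  have hper : Function.Periodic x (2 * π) :=
    hx.periodic (abs_hillCoeff_le he) periodic_hillCoeff h h'
  have hxc := hx.continuous
  have hint := hx.integral_hillCoeff_eq_zero hβ.2.ne he h h'
  have hlong {y y' : ℝ → ℝ} (hy : IsHillSolution (hillCoeff β e) y y') (a b : ℝ)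
      (hab : IsPosNodalInterval y a b) : π < b - a :=
    hy.pi_lt_of_isPosNodalInterval hab fun t _ => hillCoeff_lt_one hβ.1 he t
  by_contra! hne
  obtain ⟨t₀, ht₀⟩ := Function.ne_iff.1 hne
  obtain ⟨p, hp⟩ := hper.exists_pos_of_integral_eq_zero two_pi_pos hxc hint ht₀
  have hper' : Function.Periodic (-x) (2 * π) := fun t => by simp [hper t]
  obtain ⟨n, hn⟩ := hper'.exists_pos_of_integral_eq_zero two_pi_pos hxc.neg
    (by simp [intervalIntegral.integral_neg, hint]) (neg_ne_zero.2 ht₀)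
  exact (neg_pos.1 hn).not_ge <|
    hper.nonneg_of_nodalInterval_length_gt pi_pos hxc (hlong hx) (hlong hx.neg) hp n

theorem IsFundSol.isHillSolution {β e : ℝ} {γ : ℝ → Matrix (Fin 2) (Fin 2) ℝ}
    (hγ : IsFundSol β e γ) (v : Fin 2 → ℝ) :
    IsHillSolution (hillCoeff β e) (fun t => (γ t *ᵥ v) 1) (fun t => (γ t *ᵥ v) 0) := by
  have hJB (t : ℝ) : Jmat * Bmat β e t = !![0, -hillCoeff β e t; 1, 0] := by
    simp [Jmat, Bmat, hillCoeff]
  have hd (t : ℝ) (i : Fin 2) : HasDerivAt (fun s => (γ s *ᵥ v) i)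
      ((!![0, -hillCoeff β e t; 1, 0] *ᵥ (γ t *ᵥ v)) i) t := by
    rw [Matrix.mulVec_mulVec, ← hJB]
    simp only [Matrix.mulVec, dotProduct]
    exact HasDerivAt.fun_sum fun j _ => (hγ.2 t i j).mul_const (v j)
  intro t
  constructor
  · simpa using hd t 1
  · simpa [mul_comm] using hd t 0

/-- for `β ∈ (0,1)` the monodromy matrix is 1-nondegenerate, and the only
2π-periodic solution of `x'' = -x + βx/(1+e cos t)` is the zero solution. -/
theorem stmt_5 (β e : ℝ) (hβ : β ∈ Set.Ioo (0 : ℝ) 1) (he : e ∈ Set.Ico (0 : ℝ) 1)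
    (γ : ℝ → Matrix (Fin 2) (Fin 2) ℝ) (hγ : IsFundSol β e γ) :
    Matrix.det (γ (2 * π) - 1) ≠ 0 ∧
    ∀ x x' : ℝ → ℝ,
      (∀ t, HasDerivAt x (x' t) t) →
      (∀ t, HasDerivAt x' (-(x t) + β * x t / (1 + e * Real.cos t)) t) →
      x (2 * π) = x 0 → x' (2 * π) = x' 0 →
      ∀ t, x t = 0 := by
  have he' : |e| < 1 := abs_lt.2 ⟨by linarith [he.1], he.2⟩
  constructor
  · intro hdet
    obtain ⟨v, hv, hfix⟩ := Matrix.exists_mulVec_eq_zero_iff.2 hdet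
    rw [Matrix.sub_mulVec, Matrix.one_mulVec, sub_eq_zero] at hfix
    have h₀ : γ 0 *ᵥ v = v := by rw [hγ.1, Matrix.one_mulVec]
    have hsol := hγ.isHillSolution v
    have hx := hsol.eq_zero_of_hillCoeff hβ he' (by rw [hfix, h₀]) (by rw [hfix, h₀])
    have hx' : (γ 0 *ᵥ v) 0 = 0 := (hsol 0).1.unique (by rw [hx]; exact hasDerivAt_const 0 0)
    apply hv
    ext i
    fin_cases i
    · simpa [h₀] using hx'
    · simpa [h₀] using congrFun hx 0
  · intro x x' hx hx' h h'
    have hsol : IsHillSolution (hillCoeff β e) x x' := fun t =>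
      ⟨hx t, (hx' t).congr_deriv (by unfold hillCoeff; ring)⟩
    exact congrFun (hsol.eq_zero_of_hillCoeff hβ he' h h')
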